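/- (Demand-reduction example; PoA_0 ≥ 4/3 for the English Walrasian mechanism.) Let n = 2 agents and m = 2 items, and fix 0 < ε < 1. Define valuations v_1(S) = (1+ε) if S ≠ ∅ and v_1(∅) = 0, and v_2(S) = 2·|S|. Define bids b_1 = v_1 and b_2(S) = 2 if item 1 ∈ S, else 0. Then v_1, v_2, b_1, b_2 are all gross substitutes valuations; for every English Walrasian mechanism with bid space equal to the GS valuations, the profile (b_1, b_2) is a pure Nash equilibrium for (v_1, v_2) in which both bids are non-exposure bids; the equilibrium allocation assigns item 1 to agent 2 and item 2 to agent 1, with welfare ∑_i v_i(X_i(b)) = 3 + ε, while OPT(v) = 4. -/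

import Mathlib

/-!
Agents and items are indexed from `0`. At the bids `(exV1 ε, exB2)` the bid welfare `3 + ε` is
attained by giving item `1` to agent `0` and item `0` to agent `1`, and a second copy of either
item adds nothing, so all minimum Walrasian prices vanish and nobody pays. Agent `0` has nothing
to gain. Agent `1` could only gain by winning both items; then agent `0` wins nothing, so a second
copy of item `j` is worth `1 + ε` to agent `0`, each price is at least `1 + ε`, and agent `1` nets
at most `4 - 2(1 + ε) ≤ 2`.

For the exposure bounds, a price `W^b(𝟙 + e_j) - W^b(𝟙)` is at most any single agent's marginal
bid value for `j`: removing `j` from that agent's bundle makes any solution with a doubled item `j`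
feasible for `𝟙`. This caps agent `1`'s prices at `2` and agent `0`'s at `1 + ε`; if agent `0` wins
both items, welfare maximality gives the other (gross substitutes, hence subadditive) bid
nonpositive singleton values, hence nonpositive marginals and prices.
-/

open Finset

/-- A valuation on `m` items: normalized at `∅`, monotone, nonnegative. -/
def IsValuation {m : ℕ} (v : Finset (Fin m) → ℝ) : Prop :=
  v ∅ = 0 ∧ (∀ S T : Finset (Fin m), S ⊆ T → v S ≤ v T) ∧ (∀ S, 0 ≤ v S)

/-- `S` is in the demand set of valuation `v` at prices `p`. -/
def InDemand {m : ℕ} (v : Finset (Fin m) → ℝ) (p : Fin m → ℝ) (S : Finset (Fin m)) : Prop :=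
  ∀ T : Finset (Fin m), v T - ∑ j ∈ T, p j ≤ v S - ∑ j ∈ S, p j

/-- Gross substitutes valuations. -/
def IsGS {m : ℕ} (v : Finset (Fin m) → ℝ) : Prop :=
  IsValuation v ∧
    ∀ p q : Fin m → ℝ, (∀ j, p j ≤ q j) →
      ∀ S : Finset (Fin m), InDemand v p S →
        ∃ T : Finset (Fin m), InDemand v q T ∧ ∀ j ∈ S, p j = q j → j ∈ T

/-- Additive valuations. -/
def IsAdditive {m : ℕ} (v : Finset (Fin m) → ℝ) : Prop :=
  ∃ w : Fin m → ℝ, (∀ j, 0 ≤ w j) ∧ ∀ S : Finset (Fin m), v S = ∑ j ∈ S, w j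

/-- XOS valuations: a max over a nonempty finite family of nonnegative additive valuations. -/
def IsXOS {m : ℕ} (v : Finset (Fin m) → ℝ) : Prop :=
  ∃ (k : ℕ) (w : Fin (k + 1) → Fin m → ℝ),
    (∀ i j, 0 ≤ w i j) ∧
    ∀ S : Finset (Fin m),
      v S = Finset.univ.sup' Finset.univ_nonempty (fun i => ∑ j ∈ S, w i j)

def GSvals (m : ℕ) : Set (Finset (Fin m) → ℝ) := {u | IsGS u}
def XOSvals (m : ℕ) : Set (Finset (Fin m) → ℝ) := {u | IsXOS u}

/-- The welfare `W^b(S)`: the maximum of `∑ i, b i (X i)` over allocations (pairwise disjoint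
tuples of subsets) contained in `S`. -/
noncomputable def W {n m : ℕ} (b : Fin n → Finset (Fin m) → ℝ) (S : Finset (Fin m)) : ℝ :=
  sSup {t : ℝ | ∃ X : Fin n → Finset (Fin m),
    (∀ i j : Fin n, i ≠ j → Disjoint (X i) (X j)) ∧ (∀ i, X i ⊆ S) ∧ t = ∑ i, b i (X i)}

/-- The welfare `W^{b₋ᵢ}(S)` with agent `i` omitted. -/
noncomputable def Wminus {n m : ℕ} (b : Fin n → Finset (Fin m) → ℝ) (i : Fin n)
    (S : Finset (Fin m)) : ℝ :=
  sSup {t : ℝ | ∃ X : Fin n → Finset (Fin m),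
    (∀ k l : Fin n, k ≠ l → Disjoint (X k) (X l)) ∧ (∀ k, X k ⊆ S) ∧
    t = ∑ k ∈ Finset.univ.erase i, b k (X k)}

/-- The welfare `W^b(x)` for a multiplicity vector `x : Fin m → ℕ`: maximum of `∑ i, b i (X i)`
over tuples of sets in which each item `j` is used at most `x j` times. -/
noncomputable def Wmult {n m : ℕ} (b : Fin n → Finset (Fin m) → ℝ) (x : Fin m → ℕ) : ℝ :=
  sSup {t : ℝ | ∃ X : Fin n → Finset (Fin m),
    (∀ j : Fin m, (Finset.univ.filter fun i => j ∈ X i).card ≤ x j) ∧ t = ∑ i, b i (X i)}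

/-- The optimal welfare for the true valuations. -/
noncomputable def OPT {n m : ℕ} (v : Fin n → Finset (Fin m) → ℝ) : ℝ := W v Finset.univ

/-- A mechanism: allocation and payment maps on bid profiles. -/
structure Mechanism (n m : ℕ) where
  alloc : (Fin n → Finset (Fin m) → ℝ) → Fin n → Finset (Fin m)
  pay : (Fin n → Finset (Fin m) → ℝ) → Fin n → ℝ

/-- A bid profile lies in the bid space `B`. -/
def InBidSpace {n m : ℕ} (B : Set (Finset (Fin m) → ℝ))
    (b : Fin n → Finset (Fin m) → ℝ) : Prop :=
  ∀ i, b i ∈ B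

/-- On bid profiles from `B`, the allocation is pairwise disjoint. -/
def AllocDisjoint {n m : ℕ} (M : Mechanism n m) (B : Set (Finset (Fin m) → ℝ)) : Prop :=
  ∀ b, InBidSpace B b → ∀ i j : Fin n, i ≠ j → Disjoint (M.alloc b i) (M.alloc b j)

/-- On bid profiles from `B`, payments are nonnegative. -/
def PayNonneg {n m : ℕ} (M : Mechanism n m) (B : Set (Finset (Fin m) → ℝ)) : Prop :=
  ∀ b, InBidSpace B b → ∀ i, 0 ≤ M.pay b i

/-- The utility of agent `i` with true valuation `v` under bid profile `b`. -/
noncomputable def util {n m : ℕ} (M : Mechanism n m) (v : Finset (Fin m) → ℝ) (i : Fin n)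
    (b : Fin n → Finset (Fin m) → ℝ) : ℝ :=
  v (M.alloc b i) - M.pay b i

/-- Declared welfare maximizer. -/
def IsDWM {n m : ℕ} (M : Mechanism n m) (B : Set (Finset (Fin m) → ℝ)) : Prop :=
  (∀ b, InBidSpace B b → ∑ i, b i (M.alloc b i) = W b Finset.univ) ∧
  (∀ b, InBidSpace B b → ∀ i, M.pay b i ≤ b i (M.alloc b i)) ∧
  (∀ b, InBidSpace B b → ∀ i : Fin n, ∃ b' : Fin n → Finset (Fin m) → ℝ,
    InBidSpace B b' ∧ b' i = b i ∧ M.alloc b' i = M.alloc b i ∧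
    M.pay b' i = b i (M.alloc b i))

/-- English Walrasian mechanism: welfare-maximizing allocation w.r.t. the bids, with
payments given by the minimum Walrasian prices `W^b(𝟙 + e_j) − W^b(𝟙)`. -/
def IsEnglish {n m : ℕ} (M : Mechanism n m) (B : Set (Finset (Fin m) → ℝ)) : Prop :=
  (∀ b, InBidSpace B b → ∑ i, b i (M.alloc b i) = W b Finset.univ) ∧
  (∀ b, InBidSpace B b → ∀ i, M.pay b i =
    ∑ j ∈ M.alloc b i,
      (Wmult b (fun k => if k = j then 2 else 1) - Wmult b (fun _ => 1)))

/-- VCG mechanism: welfare-maximizing allocation w.r.t. the bids, with externality payments. -/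
def IsVCG {n m : ℕ} (M : Mechanism n m) (B : Set (Finset (Fin m) → ℝ)) : Prop :=
  (∀ b, InBidSpace B b → ∑ i, b i (M.alloc b i) = W b Finset.univ) ∧
  (∀ b, InBidSpace B b → ∀ i, M.pay b i =
    Wminus b i Finset.univ - Wminus b i (Finset.univ \ M.alloc b i))

/-- Bid `bi` of agent `i` with true valuation `v` has exposure factor `γ`. -/
def HasExposureFactor {n m : ℕ} (M : Mechanism n m) (B : Set (Finset (Fin m) → ℝ))
    (v : Finset (Fin m) → ℝ) (i : Fin n) (bi : Finset (Fin m) → ℝ) (γ : ℝ) : Prop :=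
  ∀ b : Fin n → Finset (Fin m) → ℝ, InBidSpace B b → b i = bi →
    M.pay b i ≤ (1 + γ) * v (M.alloc b i)

/-- `b` is a pure Nash equilibrium for true valuations `v`. -/
noncomputable def IsNash {n m : ℕ} (M : Mechanism n m) (B : Set (Finset (Fin m) → ℝ))
    (v b : Fin n → Finset (Fin m) → ℝ) : Prop :=
  InBidSpace B b ∧
  ∀ i : Fin n, ∀ bi' ∈ B, util M (v i) i (Function.update b i bi') ≤ util M (v i) i b

/-- A finitely supported probability distribution. -/
structure FinDist (α : Type*) where
  supp : Finset α
  μ : α → ℝ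
  nonneg : ∀ a, 0 ≤ μ a
  sum_one : ∑ a ∈ supp, μ a = 1

/-- Expectation of `f` under a finitely supported distribution. -/
noncomputable def FinDist.exp {α : Type*} (D : FinDist α) (f : α → ℝ) : ℝ :=
  ∑ a ∈ D.supp, D.μ a * f a

/-- Bayes-Nash equilibrium: strategies map types in `V` to bids in `B`, and no unilateral
deviation (depending only on the agent's own type) improves expected utility. -/
noncomputable def IsBNE {n m : ℕ} (M : Mechanism n m) (V B : Set (Finset (Fin m) → ℝ))
    (D : FinDist (Fin n → Finset (Fin m) → ℝ))
    (s : Fin n → (Finset (Fin m) → ℝ) → Finset (Fin m) → ℝ) : Prop :=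
  (∀ i : Fin n, ∀ vi ∈ V, s i vi ∈ B) ∧
  ∀ i : Fin n, ∀ s' : (Finset (Fin m) → ℝ) → Finset (Fin m) → ℝ, (∀ vi ∈ V, s' vi ∈ B) →
    D.exp (fun v => util M (v i) i (Function.update (fun k => s k (v k)) i (s' (v i)))) ≤
    D.exp (fun v => util M (v i) i (fun k => s k (v k)))

/-- Strategy `si` of agent `i` has exposure factor `γ` under distribution `D`. -/
noncomputable def BayesExposure {n m : ℕ} (M : Mechanism n m)
    (V B : Set (Finset (Fin m) → ℝ)) (D : FinDist (Fin n → Finset (Fin m) → ℝ)) (i : Fin n)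
    (si : (Finset (Fin m) → ℝ) → Finset (Fin m) → ℝ) (γ : ℝ) : Prop :=
  ∀ c : (Finset (Fin m) → ℝ) → Fin n → Finset (Fin m) → ℝ,
    (∀ vi ∈ V, InBidSpace B (c vi) ∧ c vi i = si vi) →
    D.exp (fun v => M.pay (c (v i)) i) ≤
      (1 + γ) * D.exp (fun v => (v i) (M.alloc (c (v i)) i))

/-- True valuation of agent 1: unit-demand with value 1+ε for any nonempty set. -/
noncomputable def exV1 (ε : ℝ) : Finset (Fin 2) → ℝ := fun S => if S.Nonempty then 1 + ε else 0

/-- True valuation of agent 2: additive with value 2 per item. -/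
noncomputable def exV2 : Finset (Fin 2) → ℝ := fun S => 2 * (S.card : ℝ)

/-- Demand-reduced bid of agent 2: value 2 on sets containing item 1 (index 0), else 0. -/
noncomputable def exB2 : Finset (Fin 2) → ℝ := fun S => if (0 : Fin 2) ∈ S then 2 else 0

section Welfare

variable {n m : ℕ} {b : Fin n → Finset (Fin m) → ℝ}

lemma W_le {S : Finset (Fin m)} {C : ℝ}
    (h : ∀ X : Fin n → Finset (Fin m), (∀ i j, i ≠ j → Disjoint (X i) (X j)) →
      (∀ i, X i ⊆ S) → ∑ i, b i (X i) ≤ C) : W b S ≤ C :=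
  csSup_le ⟨_, fun _ => ∅, fun _ _ _ => disjoint_bot_left, fun _ => empty_subset S, rfl⟩
    fun _ ⟨X, hX, hXS, ht⟩ => ht ▸ h X hX hXS

lemma le_W {S : Finset (Fin m)} (X : Fin n → Finset (Fin m))
    (hX : ∀ i j, i ≠ j → Disjoint (X i) (X j)) (hXS : ∀ i, X i ⊆ S) :
    ∑ i, b i (X i) ≤ W b S :=
  le_csSup ((Set.finite_range fun X : Fin n → Finset (Fin m) => ∑ i, b i (X i)).subset
    (by rintro _ ⟨Y, -, -, rfl⟩; exact ⟨Y, rfl⟩)).bddAbove ⟨X, hX, hXS, rfl⟩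

lemma Wmult_le {x : Fin m → ℕ} {C : ℝ}
    (h : ∀ X : Fin n → Finset (Fin m), (∀ j, #{i | j ∈ X i} ≤ x j) → ∑ i, b i (X i) ≤ C) :
    Wmult b x ≤ C :=
  csSup_le ⟨_, fun _ => ∅, fun _ => by simp, rfl⟩ fun _ ⟨X, hX, ht⟩ => ht ▸ h X hX

lemma le_Wmult {x : Fin m → ℕ} (X : Fin n → Finset (Fin m)) (hX : ∀ j, #{i | j ∈ X i} ≤ x j) :
    ∑ i, b i (X i) ≤ Wmult b x :=
  le_csSup ((Set.finite_range fun X : Fin n → Finset (Fin m) => ∑ i, b i (X i)).subset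
    (by rintro _ ⟨Y, -, rfl⟩; exact ⟨Y, rfl⟩)).bddAbove ⟨X, hX, rfl⟩

lemma card_filter_mem_le_one_iff (X : Fin n → Finset (Fin m)) :
    (∀ j, #{i | j ∈ X i} ≤ 1) ↔ ∀ i k, i ≠ k → Disjoint (X i) (X k) := by
  simp only [Finset.card_le_one, mem_filter, mem_univ, true_and, Finset.disjoint_left]
  exact ⟨fun h i k hik j hi hk => hik (h j i hi k hk), fun h j i hi k hk =>
    by_contra fun hik => h i k hik hi hk⟩

lemma Wmult_one (b : Fin n → Finset (Fin m) → ℝ) : Wmult b 1 = W b univ := by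
  unfold Wmult W
  congr 1
  ext t
  simp only [Pi.one_apply, card_filter_mem_le_one_iff, subset_univ, implies_true, true_and]

end Welfare

noncomputable def minWalrasPrice {n m : ℕ} (b : Fin n → Finset (Fin m) → ℝ) (j : Fin m) : ℝ :=
  Wmult b (fun k => if k = j then 2 else 1) - Wmult b (fun _ => 1)

lemma minWalrasPrice_le {m : ℕ} {b : Fin 2 → Finset (Fin m) → ℝ} {j : Fin m} (i : Fin 2)
    {C : ℝ} (h : ∀ A, b i A ≤ b i (A.erase j) + C) : minWalrasPrice b j ≤ C := by
  rw [minWalrasPrice, sub_le_iff_le_add']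
  refine Wmult_le fun X hX => ?_
  set X' := Function.update X i ((X i).erase j)
  have hX'i : X' i = (X i).erase j := Function.update_self ..
  have hX'ne : ∀ l ≠ i, X' l = X l := fun l hl => Function.update_of_ne hl ..
  have hX' : ∀ k, #{l | k ∈ X' l} ≤ 1 := by
    intro k
    by_cases hk : k = j
    · subst hk
      calc #{l | k ∈ X' l} ≤ #(univ.erase i) := by
            refine card_le_card fun l hl => mem_erase.2 ⟨fun hli => ?_, mem_univ l⟩
            simp [hli, hX'i] at hl
        _ = 1 := by simp
    · calc #{l | k ∈ X' l} ≤ #{l | k ∈ X l} := by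
            refine card_le_card (monotone_filter_right _ fun l _ hl => ?_)
            by_cases hli : l = i
            · rw [hli, hX'i] at hl; exact hli ▸ mem_of_mem_erase hl
            · rwa [hX'ne l hli] at hl
        _ ≤ 1 := by simpa [hk] using hX k
  calc ∑ l, b l (X l) = b i (X i) + ∑ l ∈ {i}ᶜ, b l (X' l) := by
        rw [Fintype.sum_eq_add_sum_compl i]
        congr 1
        exact sum_congr rfl fun l hl => by rw [hX'ne l (by simpa using hl)]
    _ ≤ b i (X' i) + ∑ l ∈ {i}ᶜ, b l (X' l) + C := by rw [hX'i]; linarith [h (X i)]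
    _ = ∑ l, b l (X' l) + C := by rw [Fintype.sum_eq_add_sum_compl i]
    _ ≤ Wmult b (fun _ => 1) + C := by gcongr; exact le_Wmult X' hX'

lemma le_minWalrasPrice_of_W_eq {m : ℕ} {b : Fin 2 → Finset (Fin m) → ℝ}
    (hW : W b univ = b 1 univ) (j : Fin m) : b 0 {j} ≤ minWalrasPrice b j := by
  have hfeas : ∀ k, #{i | k ∈ ![{j}, univ] i} ≤ if k = j then 2 else 1 := by
    intro k
    split_ifs with hk
    · exact card_le_univ _
    · refine card_le_one.2 fun a ha a' ha' => ?_
      simp only [mem_filter, mem_univ, true_and] at ha ha'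
      fin_cases a <;> fin_cases a' <;> simp_all
  have hlow := le_Wmult (b := b) _ hfeas
  simp only [Fin.sum_univ_two, Matrix.cons_val_zero, Matrix.cons_val_one] at hlow
  have hone : Wmult b (fun _ => 1) = b 1 univ := (Wmult_one b).trans hW
  rw [minWalrasPrice, hone]
  linarith

lemma InBidSpace.update {n m : ℕ} {B : Set (Finset (Fin m) → ℝ)} {b : Fin n → Finset (Fin m) → ℝ}
    (hb : InBidSpace B b) (i : Fin n) {bᵢ : Finset (Fin m) → ℝ} (hbᵢ : bᵢ ∈ B) :
    InBidSpace B (Function.update b i bᵢ) :=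
  (Function.forall_update_iff b fun _ c => c ∈ B).2 ⟨hbᵢ, fun k _ => hb k⟩

lemma IsEnglish.pay_eq {n m : ℕ} {M : Mechanism n m} {B : Set (Finset (Fin m) → ℝ)}
    (hEng : IsEnglish M B) {b : Fin n → Finset (Fin m) → ℝ} (hb : InBidSpace B b) (i : Fin n) :
    M.pay b i = ∑ j ∈ M.alloc b i, minWalrasPrice b j :=
  hEng.2 b hb i

section GrossSubstitutes

variable {m : ℕ} {v : Finset (Fin m) → ℝ} {p q : Fin m → ℝ}

lemma exists_inDemand (v : Finset (Fin m) → ℝ) (q : Fin m → ℝ) : ∃ T, InDemand v q T := by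
  obtain ⟨T, -, hT⟩ := exists_max_image univ (fun T => v T - ∑ j ∈ T, q j) univ_nonempty
  exact ⟨T, fun T' => hT T' (mem_univ T')⟩

lemma InDemand.of_le_of_eqOn {S : Finset (Fin m)} (hS : InDemand v p S)
    (hpq : ∀ j, p j ≤ q j) (hSq : ∀ j ∈ S, p j = q j) : InDemand v q S := by
  intro T
  have hT : ∑ j ∈ T, p j ≤ ∑ j ∈ T, q j := sum_le_sum fun j _ => hpq j
  have hS' : ∑ j ∈ S, p j = ∑ j ∈ S, q j := sum_congr rfl hSq
  linarith [hS T]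

lemma InDemand.union_of_nonpos (hmono : ∀ S T : Finset (Fin m), S ⊆ T → v S ≤ v T)
    {T : Finset (Fin m)} (hT : InDemand v q T) {R : Finset (Fin m)} (hR : ∀ j ∈ R, q j ≤ 0) :
    InDemand v q (R ∪ T) := by
  intro T'
  have hv := hmono T (R ∪ T) subset_union_right
  have hsplit := sum_sdiff (f := q) (subset_union_right : T ⊆ R ∪ T)
  have hnonpos : ∑ j ∈ (R ∪ T) \ T, q j ≤ 0 := sum_nonpos fun j hj => by
    simp only [mem_sdiff, mem_union] at hj
    exact hR j (hj.1.resolve_right hj.2)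
  linarith [hT T']

lemma isGS_sum (w : Fin m → ℝ) (hw : ∀ j, 0 ≤ w j) : IsGS fun S => ∑ j ∈ S, w j := by
  have hutil : ∀ (r : Fin m → ℝ) (S : Finset (Fin m)),
      ∑ j ∈ S, w j - ∑ j ∈ S, r j = ∑ j ∈ S, (w j - r j) := fun r S => (sum_sub_distrib ..).symm
  refine ⟨⟨sum_empty, fun S T hST => sum_le_sum_of_subset_of_nonneg hST fun j _ _ => hw j,
    fun S => sum_nonneg fun j _ => hw j⟩,
    fun p q hpq S hS => ⟨({j | q j ≤ w j} : Finset _), ?_, ?_⟩⟩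
  · intro T
    simp only [hutil]
    calc ∑ j ∈ T, (w j - q j)
        ≤ ∑ j ∈ T with q j ≤ w j, (w j - q j) := by
          rw [← sum_filter_add_sum_filter_not T (fun j => q j ≤ w j)]
          simp only [add_le_iff_nonpos_right]
          exact sum_nonpos fun j hj => by simp only [mem_filter, not_le] at hj; linarith [hj.2]
      _ ≤ ∑ j with q j ≤ w j, (w j - q j) :=
          sum_le_sum_of_subset_of_nonneg (filter_subset_filter _ (subset_univ T))
            fun j hj _ => by simp only [mem_filter] at hj; linarith [hj.2]
  · intro j hj hpj
    have hdrop := hS (S.erase j)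
    simp only [hutil] at hdrop
    rw [← add_sum_erase S _ hj] at hdrop
    simp only [mem_filter, mem_univ, true_and]
    linarith

lemma isGS_ite_nonempty {a : ℝ} (ha : 0 ≤ a) :
    IsGS fun S : Finset (Fin m) => if S.Nonempty then a else 0 := by
  have hmono : ∀ S T : Finset (Fin m), S ⊆ T →
      (if S.Nonempty then a else 0) ≤ if T.Nonempty then a else 0 := by
    intro S T hST
    by_cases hS : S.Nonempty
    · rw [if_pos hS, if_pos (hS.mono hST)]
    · rw [if_neg hS]; split <;> linarith
  refine ⟨⟨by simp, hmono, fun S => by beta_reduce; split <;> linarith⟩, fun p q hpq S hS => ?_⟩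
  by_cases hfixed : ∀ j ∈ S, p j = q j
  · exact ⟨S, hS.of_le_of_eqOn hpq hfixed, fun j hj _ => hj⟩
  push Not at hfixed
  obtain ⟨k, hkS, hk⟩ := hfixed
  -- for `j ≠ k` in `S`, `S.erase j` still contains `k`, so it is worth as much as `S`;
  -- optimality of `S` then gives `p j ≤ 0`
  have hR : ∀ j ∈ S.filter (fun j => p j = q j), q j ≤ 0 := by
    intro j hj
    obtain ⟨hjS, hpj⟩ := mem_filter.1 hj
    have hkj : k ∈ S.erase j := mem_erase.2 ⟨fun hkj => hk (hkj ▸ hpj), hkS⟩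
    have hdrop := hS (S.erase j)
    beta_reduce at hdrop
    rw [if_pos ⟨k, hkj⟩, if_pos ⟨k, hkS⟩, ← add_sum_erase S _ hjS] at hdrop
    linarith
  obtain ⟨T, hT⟩ := exists_inDemand (fun S : Finset (Fin m) => if S.Nonempty then a else 0) q
  exact ⟨_, hT.union_of_nonpos hmono hR, fun j hj hpj => mem_union_left T (mem_filter.2 ⟨hj, hpj⟩)⟩

end GrossSubstitutes

section TwoItems

lemma finset_fin_two_cases (S : Finset (Fin 2)) : S = ∅ ∨ S = {0} ∨ S = {1} ∨ S = univ := by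
  revert S; decide

lemma IsGS.apply_univ_le {v : Finset (Fin 2) → ℝ} (hv : IsGS v) : v univ ≤ v {0} + v {1} := by
  obtain ⟨⟨hv0, hmono, hnn⟩, hgs⟩ := hv
  by_contra! hcompl
  -- complementarity: at prices `v {i} + δ` the bundle `univ` is demanded, but once item `1` gets
  -- dearer no demanded set contains item `0`
  set δ := (v univ - v {0} - v {1}) / 2
  have hδ : 0 < δ := by simp only [δ]; linarith
  have hv1 : v {1} ≤ v univ := hmono _ _ (subset_univ _)
  have hdem : InDemand v ![v {0} + δ, v {1} + δ] univ := by
    intro T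
    rcases finset_fin_two_cases T with rfl | rfl | rfl | rfl <;>
      simp [Fin.sum_univ_two, hv0, δ] <;> linarith [hnn {0}]
  obtain ⟨T, hT, h0T⟩ := hgs _ ![v {0} + δ, v univ + 1] (fun j => by
    fin_cases j <;> simp [δ]; linarith [hnn {0}]) univ hdem
  have hT0 : (0 : Fin 2) ∈ T := h0T 0 (mem_univ 0) rfl
  have hTempty := hT ∅
  rcases finset_fin_two_cases T with rfl | rfl | rfl | rfl <;>
    simp_all [Fin.sum_univ_two] <;> linarith [hnn {0}]

lemma IsGS.le_erase_add_singleton {v : Finset (Fin 2) → ℝ} (hv : IsGS v)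
    (A : Finset (Fin 2)) (j : Fin 2) : v A ≤ v (A.erase j) + v {j} := by
  have hsub := hv.apply_univ_le
  obtain ⟨⟨hv0, -, hnn⟩, -⟩ := hv
  have herase0 : (univ : Finset (Fin 2)).erase 0 = {1} := by decide
  have herase1 : (univ : Finset (Fin 2)).erase 1 = {0} := by decide
  fin_cases j <;> rcases finset_fin_two_cases A with rfl | rfl | rfl | rfl <;>
    simp [hv0, herase0, herase1] <;> linarith [hnn {0}, hnn {1}]

end TwoItems

section Example

variable {ε : ℝ}

lemma exV1_isGS (hε : 0 ≤ ε) : IsGS (exV1 ε) := isGS_ite_nonempty (by linarith)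

lemma exV2_isGS : IsGS exV2 := by
  convert isGS_sum (fun _ => (2 : ℝ)) fun _ => zero_le_two using 1
  ext S
  simp [exV2, mul_comm]

lemma exB2_isGS : IsGS exB2 := by
  convert isGS_sum (fun j : Fin 2 => if j = 0 then (2 : ℝ) else 0)
    (fun j => by split <;> norm_num) using 1
  ext S
  simp [exB2]

lemma exV1_le (hε : 0 ≤ ε) (S : Finset (Fin 2)) : exV1 ε S ≤ 1 + ε := by
  unfold exV1; split <;> linarith

lemma exV1_nonneg (hε : 0 ≤ ε) (S : Finset (Fin 2)) : 0 ≤ exV1 ε S := (exV1_isGS hε).1.2.2 S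

lemma exB2_le (S : Finset (Fin 2)) : exB2 S ≤ 2 := by
  unfold exB2; split <;> norm_num

lemma eq_of_disjoint_of_exBids {A₀ A₁ : Finset (Fin 2)} (hε : 0 ≤ ε) (hd : Disjoint A₀ A₁)
    (h : exV1 ε A₀ + exB2 A₁ = 3 + ε) : A₀ = {1} ∧ A₁ = {0} := by
  rcases finset_fin_two_cases A₀ with rfl | rfl | rfl | rfl <;>
    rcases finset_fin_two_cases A₁ with rfl | rfl | rfl | rfl <;>
    first
    | exact ⟨rfl, rfl⟩
    | exact absurd hd (by decide)
    | (simp [exV1, exB2] at h <;> linarith)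

lemma sum_exBids_le (hε : 0 ≤ ε) (X : Fin 2 → Finset (Fin 2)) :
    ∑ i, ![exV1 ε, exB2] i (X i) ≤ 3 + ε := by
  simp only [Fin.sum_univ_two, Matrix.cons_val_zero, Matrix.cons_val_one]
  linarith [exV1_le hε (X 0), exB2_le (X 1)]

lemma Wmult_exBids (hε : 0 ≤ ε) {x : Fin 2 → ℕ} (hx : 1 ≤ x) :
    Wmult ![exV1 ε, exB2] x = 3 + ε := by
  refine le_antisymm (Wmult_le fun X _ => sum_exBids_le hε X) ?_
  have hfeas : ∀ j, #{i | j ∈ ![({1} : Finset (Fin 2)), {0}] i} ≤ x j := fun j =>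
    ((card_filter_mem_le_one_iff _).2 (by decide) j).trans (hx j)
  have hle := le_Wmult (b := ![exV1 ε, exB2]) _ hfeas
  simp [Fin.sum_univ_two, exV1, exB2] at hle
  linarith

lemma W_exBids (hε : 0 ≤ ε) : W ![exV1 ε, exB2] univ = 3 + ε := by
  rw [← Wmult_one]; exact Wmult_exBids hε le_rfl

lemma minWalrasPrice_exBids (hε : 0 ≤ ε) (j : Fin 2) :
    minWalrasPrice ![exV1 ε, exB2] j = 0 := by
  rw [minWalrasPrice, Wmult_exBids hε, Wmult_exBids hε (x := fun _ => 1) le_rfl, sub_self]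
  intro k
  simp only [Pi.one_apply]
  split <;> simp

lemma exBids_mem (hε : 0 ≤ ε) : InBidSpace (GSvals 2) ![exV1 ε, exB2] := by
  intro i
  fin_cases i
  exacts [exV1_isGS hε, exB2_isGS]

end Example

section EnglishMechanism

variable {M : Mechanism 2 2} {ε : ℝ}

lemma IsEnglish.alloc_exBids (hEng : IsEnglish M (GSvals 2)) (hdisj : AllocDisjoint M (GSvals 2))
    (hε : 0 ≤ ε) : M.alloc ![exV1 ε, exB2] 0 = {1} ∧ M.alloc ![exV1 ε, exB2] 1 = {0} := by
  have h := hEng.1 _ (exBids_mem hε)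
  rw [W_exBids hε, Fin.sum_univ_two] at h
  exact eq_of_disjoint_of_exBids hε (hdisj _ (exBids_mem hε) 0 1 (by decide)) h

lemma IsEnglish.pay_exBids (hEng : IsEnglish M (GSvals 2)) (hε : 0 ≤ ε) (i : Fin 2) :
    M.pay ![exV1 ε, exB2] i = 0 := by
  rw [hEng.pay_eq (exBids_mem hε)]
  exact sum_eq_zero fun j _ => minWalrasPrice_exBids hε j

lemma IsEnglish.util_update_zero_le (hEng : IsEnglish M (GSvals 2))
    (hdisj : AllocDisjoint M (GSvals 2)) (hpay : PayNonneg M (GSvals 2)) (hε : 0 ≤ ε)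
    {b₀ : Finset (Fin 2) → ℝ} (hb₀ : b₀ ∈ GSvals 2) :
    util M (exV1 ε) 0 (Function.update ![exV1 ε, exB2] 0 b₀) ≤
      util M (exV1 ε) 0 ![exV1 ε, exB2] := by
  have hb := (exBids_mem hε).update 0 hb₀
  unfold util
  rw [(hEng.alloc_exBids hdisj hε).1, hEng.pay_exBids hε]
  have hv : exV1 ε {1} = 1 + ε := by simp [exV1]
  linarith [exV1_le hε (M.alloc (Function.update ![exV1 ε, exB2] 0 b₀) 0), hpay _ hb 0]

lemma IsEnglish.util_update_one_le (hEng : IsEnglish M (GSvals 2))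
    (hdisj : AllocDisjoint M (GSvals 2)) (hpay : PayNonneg M (GSvals 2)) (hε : 0 ≤ ε)
    {b₁ : Finset (Fin 2) → ℝ} (hb₁ : b₁ ∈ GSvals 2) :
    util M exV2 1 (Function.update ![exV1 ε, exB2] 1 b₁) ≤ util M exV2 1 ![exV1 ε, exB2] := by
  set b := Function.update ![exV1 ε, exB2] 1 b₁
  have hb : InBidSpace (GSvals 2) b := (exBids_mem hε).update 1 hb₁
  have hv : exV2 {0} = 2 := by norm_num [exV2]
  unfold util
  rw [(hEng.alloc_exBids hdisj hε).2, hEng.pay_exBids hε]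
  by_cases hA : M.alloc b 1 = univ
  · -- each item is priced at least at agent `0`'s value `1 + ε` for it
    have hA0 : M.alloc b 0 = ∅ := eq_empty_of_forall_notMem fun j hj =>
      disjoint_left.1 (hdisj b hb 0 1 (by decide)) hj (hA ▸ mem_univ j)
    have hW : W b univ = b 1 univ := by
      rw [← hEng.1 b hb, Fin.sum_univ_two, hA0, hA]
      simp [b, exV1]
    have hprice : ∀ j, 1 + ε ≤ minWalrasPrice b j := fun j => by
      simpa [b, exV1] using le_minWalrasPrice_of_W_eq hW j
    have hv' : exV2 univ = 4 := by norm_num [exV2]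
    rw [hEng.pay_eq hb 1, hA, Fin.sum_univ_two, hv']
    linarith [hprice 0, hprice 1]
  · have hcard : #(M.alloc b 1) ≤ 1 := by
      have := (card_lt_iff_ne_univ _).2 hA
      simp only [Fintype.card_fin] at this
      omega
    have hcard' : (#(M.alloc b 1) : ℝ) ≤ 1 := by exact_mod_cast hcard
    rw [hv, exV2]
    linarith [hpay b hb 1]

lemma IsEnglish.hasExposureFactor_exV1 (hEng : IsEnglish M (GSvals 2))
    (hdisj : AllocDisjoint M (GSvals 2)) (hε : 0 ≤ ε) :
    HasExposureFactor M (GSvals 2) (exV1 ε) 0 (exV1 ε) 0 := by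
  intro c hc hc0
  rw [hEng.pay_eq hc 0, add_zero, one_mul]
  have hprice : ∀ j, minWalrasPrice c j ≤ 1 + ε := fun j => minWalrasPrice_le 0 fun A => by
    rw [hc0]; linarith [exV1_le hε A, exV1_nonneg hε (A.erase j)]
  rcases finset_fin_two_cases (M.alloc c 0) with hA | hA | hA | hA
  · simp [hA, exV1]
  · simpa [hA, exV1] using hprice 0
  · simpa [hA, exV1] using hprice 1
  -- winning both items forces the other (subadditive) bid to have nonpositive marginal values
  have hA1 : M.alloc c 1 = ∅ := eq_empty_of_forall_notMem fun j hj =>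
    disjoint_left.1 (hdisj c hc 1 0 (by decide)) hj (hA ▸ mem_univ j)
  have hW : W c univ = 1 + ε := by
    rw [← hEng.1 c hc, Fin.sum_univ_two, hA, hA1, hc0, (hc 1).1.1]
    simp [exV1]
  have hsingle : ∀ j, c 1 {j} ≤ 0 := fun j => by
    have hX : ∀ i k, i ≠ k → Disjoint (![{j}ᶜ, {j}] i) (![{j}ᶜ, {j}] k : Finset (Fin 2)) := by
      intro i k hik
      fin_cases i <;> fin_cases k <;> simp_all
    have hle := le_W (b := c) _ hX fun _ => subset_univ _
    simp only [Fin.sum_univ_two, Matrix.cons_val_zero, Matrix.cons_val_one, hc0, hW] at hle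
    have hv : exV1 ε {j}ᶜ = 1 + ε := by
      fin_cases j <;> simp [exV1]
    linarith
  have hprice' : ∀ j, minWalrasPrice c j ≤ 0 := fun j => minWalrasPrice_le 1 fun A => by
    linarith [(hc 1).le_erase_add_singleton A j, hsingle j]
  rw [hA]
  exact (sum_nonpos fun j _ => hprice' j).trans (exV1_nonneg hε univ)

lemma IsEnglish.hasExposureFactor_exB2 (hEng : IsEnglish M (GSvals 2)) :
    HasExposureFactor M (GSvals 2) exV2 1 exB2 0 := by
  intro c hc hc1
  have hprice : ∀ j, minWalrasPrice c j ≤ 2 := fun j => minWalrasPrice_le 1 fun A => by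
    rw [hc1]; unfold exB2; split_ifs <;> norm_num
  rw [hEng.pay_eq hc 1, add_zero, one_mul, exV2, mul_comm, ← nsmul_eq_mul, ← sum_const]
  exact sum_le_sum fun j _ => hprice j

end EnglishMechanism

lemma OPT_exVals {ε : ℝ} (hε1 : ε ≤ 1) : OPT ![exV1 ε, exV2] = 4 := by
  refine le_antisymm (W_le fun X hX _ => ?_) ?_
  · have hV1 : exV1 ε (X 0) ≤ 2 * #(X 0) := by
      unfold exV1
      split_ifs with hne
      · have : (1 : ℝ) ≤ #(X 0) := by exact_mod_cast hne.card_pos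
        linarith
      · positivity
    have hcard : #(X 0 ∪ X 1) = #(X 0) + #(X 1) := card_union_of_disjoint (hX 0 1 (by decide))
    have hcard' : ((#(X 0) + #(X 1) : ℕ) : ℝ) ≤ 2 := by
      rw [← hcard]; exact_mod_cast card_le_univ _
    simp only [Fin.sum_univ_two, Matrix.cons_val_zero, Matrix.cons_val_one, exV2]
    push_cast at hcard'
    linarith
  · have := le_W (b := ![exV1 ε, exV2]) ![∅, univ] (by decide) fun _ => subset_univ _
    norm_num [exV1, exV2] at this
    exact this

/-- demand reduction; PoA₀ ≥ 4/3 for the English Walrasian mechanism: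
with true valuations (exV1 ε, exV2) and bids (exV1 ε, exB2), all four functions are GS;
the bid profile is a pure Nash equilibrium in non-exposure bids of every English Walrasian
mechanism on the GS bid space; the allocation gives item 2 (index 1) to agent 1 and item 1
(index 0) to agent 2, with welfare 3 + ε, while OPT = 4. -/
theorem stmt14 (ε : ℝ) (hε : 0 < ε) (hε1 : ε < 1) :
    IsGS (exV1 ε) ∧ IsGS exV2 ∧ IsGS exB2 ∧
    ∀ M : Mechanism 2 2,
      AllocDisjoint M (GSvals 2) → PayNonneg M (GSvals 2) → IsEnglish M (GSvals 2) →
        IsNash M (GSvals 2) ![exV1 ε, exV2] ![exV1 ε, exB2] ∧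
        (∀ i : Fin 2,
          HasExposureFactor M (GSvals 2) (![exV1 ε, exV2] i) i (![exV1 ε, exB2] i) 0) ∧
        M.alloc ![exV1 ε, exB2] 0 = {1} ∧ M.alloc ![exV1 ε, exB2] 1 = {0} ∧
        (∑ i, ![exV1 ε, exV2] i (M.alloc ![exV1 ε, exB2] i)) = 3 + ε ∧
        OPT ![exV1 ε, exV2] = 4 := by
  refine ⟨exV1_isGS hε.le, exV2_isGS, exB2_isGS, fun M hdisj hpay hEng => ?_⟩
  obtain ⟨hA0, hA1⟩ := hEng.alloc_exBids hdisj hε.le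
  refine ⟨⟨exBids_mem hε.le, fun i bᵢ hbᵢ => ?_⟩, fun i => ?_, hA0, hA1, ?_, OPT_exVals hε1.le⟩
  · fin_cases i
    exacts [hEng.util_update_zero_le hdisj hpay hε.le hbᵢ,
      hEng.util_update_one_le hdisj hpay hε.le hbᵢ]
  · fin_cases i
    exacts [hEng.hasExposureFactor_exV1 hdisj hε.le, hEng.hasExposureFactor_exB2]
  · simp [Fin.sum_univ_two, hA0, hA1, exV1, exV2]
    ring
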